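/- There exists a countable example space X and a countable class H ⊆ {0,1}^X satisfying the UUS property that is non-uniformly generatable but not uniformly generatable. Concretely, X = ℤ and H = H^e ∪ H^o (indicator classes from finite blocks A_d together with negative evens E or negative odds O respectively) works: H is countable hence non-uniformly generatable, but C(H) = ∞ hence not uniformly generatable. -/

import Mathlib

open Set

variable {X : Type*}

/-- The set of distinct examples seen in the first `t` steps of the stream `x`. -/
def seenSet (x : ℕ → X) (t : ℕ) : Set X := x '' {i | i < t}

/-- The finite prefix `x₁, ..., x_t` of the stream, as a list. -/
def prefList (x : ℕ → X) (t : ℕ) : List X := List.ofFn (fun i : Fin t => x i)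

/-- The version space of `H` induced by the positive examples `S`. -/
def versionSpace (H : Set (Set X)) (S : Set X) : Set (Set X) := {h | h ∈ H ∧ S ⊆ h}

/-- The closure `⟨S⟩_H`: common positive examples of all consistent hypotheses. -/
def hclosure (H : Set (Set X)) (S : Set X) : Set X := ⋂₀ versionSpace H S

/-- There exist `d` distinct examples with nonempty version space and finite closure. -/
def FinClosureWitness (H : Set (Set X)) (d : ℕ) : Prop :=
  ∃ S : Finset X, S.card = d ∧ (versionSpace H ↑S).Nonempty ∧ (hclosure H ↑S).Finite

/-- The Closure dimension of `H` is infinite. -/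
def ClosureDimInf (H : Set (Set X)) : Prop := ∀ n : ℕ, ∃ d, n ≤ d ∧ FinClosureWitness H d

/-- The Closure dimension of `H` is at most `d`. -/
def ClosureDimLE (H : Set (Set X)) (d : ℕ) : Prop := ∀ d', d < d' → ¬ FinClosureWitness H d'

/-- Uniformly Unbounded Support property. -/
def UUS (H : Set (Set X)) : Prop := ∀ h ∈ H, h.Infinite

/-- The generator `G` outputs an unseen positive example of `h` at step `s`. -/
def GenOK (G : List X → X) (h : Set X) (x : ℕ → X) (s : ℕ) : Prop :=
  G (prefList x s) ∈ h \ seenSet x s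

def UniformlyGeneratable (H : Set (Set X)) : Prop :=
  ∃ G : List X → X, ∃ d : ℕ, ∀ h ∈ H, ∀ x : ℕ → X, (∀ i, x i ∈ h) →
    ∀ t, (seenSet x t).ncard = d → ∀ s, t ≤ s → GenOK G h x s

def NonUniformlyGeneratable (H : Set (Set X)) : Prop :=
  ∃ G : List X → X, ∀ h ∈ H, ∃ d : ℕ, ∀ x : ℕ → X, (∀ i, x i ∈ h) →
    ∀ t, (seenSet x t).ncard = d → ∀ s, t ≤ s → GenOK G h x s

/-- `x` is an enumeration of the support `h`. -/
def IsEnum (h : Set X) (x : ℕ → X) : Prop := (∀ i, x i ∈ h) ∧ ∀ y ∈ h, ∃ i, x i = y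

def GeneratableInLimit (H : Set (Set X)) : Prop :=
  ∃ G : List X → X, ∀ h ∈ H, ∀ x : ℕ → X, IsEnum h x →
    ∃ t, ∀ s, t ≤ s → GenOK G h x s

/-- The block `A_d = {d(d-1)/2 + 1, ..., d(d-1)/2 + d}` as a subset of `ℤ`. -/
def Ablock (d : ℕ) : Set ℤ :=
  {x : ℤ | (d : ℤ) * ((d : ℤ) - 1) / 2 + 1 ≤ x ∧ x ≤ (d : ℤ) * ((d : ℤ) - 1) / 2 + (d : ℤ)}

/-- The negative even integers. -/
def Eneg : Set ℤ := {x : ℤ | x < 0 ∧ Even x}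

/-- The negative odd integers. -/
def Oneg : Set ℤ := {x : ℤ | x < 0 ∧ Odd x}

/-- `H^e = {x ↦ 1[x ∈ A_d ∪ E] : d ∈ ℕ}`. -/
def He : Set (Set ℤ) := {h | ∃ d : ℕ, 1 ≤ d ∧ h = Ablock d ∪ Eneg}

/-- `H^o = {x ↦ 1[x ∈ A_d ∪ O] : d ∈ ℕ}`. -/
def Ho : Set (Set ℤ) := {h | ∃ d : ℕ, 1 ≤ d ∧ h = Ablock d ∪ Oneg}

/-- `H = H^e ∪ H^o`. -/
def Hblocks : Set (Set ℤ) := He ∪ Ho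

/-!
Non-uniform generation: a generator that outputs a fresh negative even number once a negative even
number has been seen, and a fresh negative odd number otherwise, succeeds on `A_d ∪ O` from the
start and on `A_d ∪ E` after `d + 1` distinct examples, since these cannot all lie in `A_d`.

No uniform bound exists: the only hypotheses containing `A_d` are `A_d ∪ E` and `A_d ∪ O`, so the
closure of `A_d` is `A_d` itself. After a stream has shown all of `A_d`, a generator would have to
output an unseen element of that closure, and `d` can be taken beyond any proposed bound.
-/

section Streams

variable {x : ℕ → X}

theorem mem_seenSet {s : ℕ} {a : X} : a ∈ seenSet x s ↔ ∃ i < s, x i = a := Iff.rfl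

theorem mem_prefList {s : ℕ} {a : X} : a ∈ prefList x s ↔ ∃ i < s, x i = a := by
  simp only [prefList, List.mem_ofFn]
  exact ⟨fun ⟨i, hi⟩ => ⟨i, i.isLt, hi⟩, fun ⟨i, hi, hxi⟩ => ⟨⟨i, hi⟩, hxi⟩⟩

theorem seenSet_succ (s : ℕ) : seenSet x (s + 1) = insert (x s) (seenSet x s) := by
  ext a
  simp only [mem_seenSet, mem_insert_iff, Nat.lt_succ_iff_lt_or_eq]
  grind

/-- The number of distinct examples grows by at most one per step, so it passes through every
value below its current one. -/
theorem exists_le_seenSet_ncard_eq {d s : ℕ} (h : d ≤ (seenSet x s).ncard) :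
    ∃ t ≤ s, (seenSet x t).ncard = d := by
  induction s with
  | zero => exact ⟨0, le_rfl, by simp_all [seenSet]⟩
  | succ s ih =>
    by_cases hs : d ≤ (seenSet x s).ncard
    · obtain ⟨t, hts, ht⟩ := ih hs
      exact ⟨t, hts.trans s.le_succ, ht⟩
    · have := ncard_insert_le (x s) (seenSet x s)
      rw [← seenSet_succ] at this
      exact ⟨s + 1, le_rfl, by omega⟩

theorem exists_lt_notMem_of_ncard_lt {A : Set X} {t : ℕ} (hA : A.Finite)
    (h : A.ncard < (seenSet x t).ncard) : ∃ i < t, x i ∉ A := by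
  by_contra! hsub
  have : seenSet x t ⊆ A := by
    rintro _ ⟨i, hi, rfl⟩
    exact hsub i hi
  exact (ncard_le_ncard this hA).not_gt h

theorem genOK_iff_of_notMem {G : List X → X} (hG : ∀ L, G L ∉ L) {h : Set X} {s : ℕ} :
    GenOK G h x s ↔ G (prefList x s) ∈ h := by
  refine ⟨And.left, fun hmem => ⟨hmem, fun hseen => hG (prefList x s) ?_⟩⟩
  exact mem_prefList.2 (mem_seenSet.1 hseen)

end Streams

/-- Once a stream has shown all of `S`, the output must be unseen yet lie in the closure of `S`. -/
theorem not_uniformlyGeneratable_of_hclosure_subset {H : Set (Set X)}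
    (hS : ∀ d, ∃ S : Finset X, d ≤ S.card ∧ (versionSpace H S).Nonempty ∧ hclosure H S ⊆ S) :
    ¬ UniformlyGeneratable H := by
  rintro ⟨G, d, hG⟩
  obtain ⟨S, hdS, ⟨h, hH, hSh⟩, hcl⟩ := hS (d + 1)
  obtain ⟨a₀, ha₀⟩ : S.Nonempty := Finset.card_pos.1 (by omega)
  set x : ℕ → X := fun i => S.toList.getD i a₀
  have hxS (i : ℕ) : x i ∈ S := by
    change S.toList.getD i a₀ ∈ S
    by_cases hi : i < S.toList.length
    · rw [List.getD_eq_getElem _ _ hi]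
      exact Finset.mem_toList.1 (List.getElem_mem hi)
    · rwa [List.getD_eq_default _ _ (not_lt.1 hi)]
  have hseen : seenSet x S.card = S := by
    ext a
    simp only [mem_seenSet, Finset.mem_coe, ← Finset.mem_toList, List.mem_iff_getElem,
      ← Finset.length_toList]
    constructor
    · rintro ⟨i, hi, rfl⟩
      exact ⟨i, hi, (List.getD_eq_getElem _ _ hi).symm⟩
    · rintro ⟨i, hi, rfl⟩
      exact ⟨i, hi, List.getD_eq_getElem _ _ hi⟩
  obtain ⟨t, hts, ht⟩ : ∃ t ≤ S.card, (seenSet x t).ncard = d :=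
    exists_le_seenSet_ncard_eq (by rw [hseen, ncard_coe_finset]; omega)
  have hgen {h' : Set X} (hh' : h' ∈ versionSpace H S) :
      G (prefList x S.card) ∈ h' \ (S : Set X) :=
    hseen ▸ hG h' hh'.1 x (fun i => hh'.2 (hxS i)) t ht S.card hts
  exact (hgen ⟨hH, hSh⟩).2 (hcl fun h' hh' => (hgen hh').1)

theorem Ablock_eq_Icc (d : ℕ) :
    Ablock d = Icc ((d : ℤ) * ((d : ℤ) - 1) / 2 + 1) ((d : ℤ) * ((d : ℤ) - 1) / 2 + d) := rfl

theorem Ablock_finite (d : ℕ) : (Ablock d).Finite := by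
  rw [Ablock_eq_Icc]
  exact finite_Icc _ _

theorem Ablock_ncard (d : ℕ) : (Ablock d).ncard = d := by
  rw [Ablock_eq_Icc, ← Finset.coe_Icc, ncard_coe_finset, Int.card_Icc]
  omega

theorem pos_of_mem_Ablock {d : ℕ} {a : ℤ} (ha : a ∈ Ablock d) : 0 < a := by
  have : 0 ≤ (d : ℤ) * ((d : ℤ) - 1) := by
    rcases d with _ | d
    · simp
    · push_cast
      ring_nf
      positivity
  have := Int.ediv_nonneg this zero_le_two
  exact lt_of_lt_of_le (by omega) ha.1

theorem Eneg_infinite : Eneg.Infinite :=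
  infinite_of_injective_forall_mem (f := fun n : ℕ => -2 * ((n : ℤ) + 1))
    (fun _ _ h => by simp only at h; omega) fun n => ⟨by omega, ⟨-((n : ℤ) + 1), by ring⟩⟩

theorem Oneg_infinite : Oneg.Infinite :=
  infinite_of_injective_forall_mem (f := fun n : ℕ => -(2 * (n : ℤ) + 1))
    (fun _ _ h => by simp only at h; omega) fun n => ⟨by omega, ⟨-((n : ℤ) + 1), by ring⟩⟩

theorem notMem_Eneg_of_mem_Oneg {a : ℤ} (ha : a ∈ Oneg) : a ∉ Eneg :=
  fun ha' => Int.not_even_iff_odd.2 ha.2 ha'.2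

theorem notMem_Eneg_of_mem_Ablock {d : ℕ} {a : ℤ} (ha : a ∈ Ablock d) : a ∉ Eneg :=
  fun ha' => (pos_of_mem_Ablock ha).not_gt ha'.1

theorem countable_Hblocks : Hblocks.Countable := by
  refine ((countable_range fun d => Ablock d ∪ Eneg).mono ?_).union
    ((countable_range fun d => Ablock d ∪ Oneg).mono ?_) <;>
  · rintro _ ⟨d, -, rfl⟩
    exact ⟨d, rfl⟩

theorem uus_Hblocks : UUS Hblocks := by
  rintro h (⟨d, -, rfl⟩ | ⟨d, -, rfl⟩)
  · exact Eneg_infinite.mono subset_union_right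
  · exact Oneg_infinite.mono subset_union_right

theorem hclosure_Hblocks_Ablock_subset {d : ℕ} (hd : 1 ≤ d) :
    hclosure Hblocks (Ablock d) ⊆ Ablock d := by
  intro a ha
  have hE := ha (Ablock d ∪ Eneg) ⟨Or.inl ⟨d, hd, rfl⟩, subset_union_left⟩
  have hO := ha (Ablock d ∪ Oneg) ⟨Or.inr ⟨d, hd, rfl⟩, subset_union_left⟩
  rcases hE with hA | hE
  · exact hA
  · exact hO.resolve_right fun hO => notMem_Eneg_of_mem_Oneg hO hE

open scoped Classical in
noncomputable def parityGenerator (L : List ℤ) : ℤ :=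
  if ∃ a ∈ L, a ∈ Eneg then -(2 * ((L.map Int.natAbs).sum : ℤ) + 2)
  else -(2 * ((L.map Int.natAbs).sum : ℤ) + 1)

theorem parityGenerator_notMem (L : List ℤ) : parityGenerator L ∉ L := by
  intro hmem
  have := List.le_sum_of_mem (List.mem_map_of_mem (f := Int.natAbs) hmem)
  unfold parityGenerator at this
  split_ifs at this <;> omega

theorem parityGenerator_mem_Eneg {L : List ℤ} (hL : ∃ a ∈ L, a ∈ Eneg) :
    parityGenerator L ∈ Eneg := by
  rw [parityGenerator, if_pos hL]
  exact ⟨by omega, ⟨-((L.map Int.natAbs).sum + 1 : ℤ), by ring⟩⟩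

theorem parityGenerator_mem_Oneg {L : List ℤ} (hL : ∀ a ∈ L, a ∉ Eneg) :
    parityGenerator L ∈ Oneg := by
  rw [parityGenerator, if_neg (by simpa using hL)]
  exact ⟨by omega, ⟨-((L.map Int.natAbs).sum + 1 : ℤ), by ring⟩⟩

theorem nonUniformlyGeneratable_Hblocks : NonUniformlyGeneratable Hblocks := by
  refine ⟨parityGenerator, ?_⟩
  rintro h (⟨d, -, rfl⟩ | ⟨d, -, rfl⟩)
  · refine ⟨d + 1, fun x hx t ht s hts => ?_⟩
    rw [genOK_iff_of_notMem parityGenerator_notMem]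
    obtain ⟨i, hi, hxi⟩ := exists_lt_notMem_of_ncard_lt (Ablock_finite d)
      (by rw [Ablock_ncard, ht]; omega)
    exact Or.inr <| parityGenerator_mem_Eneg
      ⟨x i, mem_prefList.2 ⟨i, by omega, rfl⟩, (hx i).resolve_left hxi⟩
  · refine ⟨0, fun x hx _ _ s _ => ?_⟩
    rw [genOK_iff_of_notMem parityGenerator_notMem]
    refine Or.inr <| parityGenerator_mem_Oneg fun a ha => ?_
    obtain ⟨i, -, rfl⟩ := mem_prefList.1 ha
    exact (hx i).elim notMem_Eneg_of_mem_Ablock notMem_Eneg_of_mem_Oneg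

theorem not_uniformlyGeneratable_Hblocks : ¬ UniformlyGeneratable Hblocks := by
  refine not_uniformlyGeneratable_of_hclosure_subset fun n => ?_
  obtain ⟨hfin, hd⟩ : (Ablock (n + 1)).Finite ∧ 1 ≤ n + 1 := ⟨Ablock_finite _, by omega⟩
  refine ⟨hfin.toFinset, ?_, ⟨Ablock (n + 1) ∪ Eneg, Or.inl ⟨n + 1, hd, rfl⟩, ?_⟩, ?_⟩
  · rw [← ncard_eq_toFinset_card _ hfin, Ablock_ncard]
    omega
  · simp [subset_union_left]
  · simpa using hclosure_Hblocks_Ablock_subset hd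

/-- a countable UUS class that is non-uniformly generatable but
not uniformly generatable. -/
theorem stmt10 :
    Hblocks.Countable ∧ UUS Hblocks ∧
    NonUniformlyGeneratable Hblocks ∧ ¬ UniformlyGeneratable Hblocks := by
  exact ⟨countable_Hblocks, uus_Hblocks, nonUniformlyGeneratable_Hblocks,
    not_uniformlyGeneratable_Hblocks⟩
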